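/- arXiv:math/0512595 — 4 statements merged into one kernel-verified Lean document; each statement's English description precedes it below -/
import Mathlib

section
/- Let d be a positive integer and let ω(d) denote the number of distinct prime divisors of d. Then the orthogonal group O(q_R) of the discriminant quadratic form q_R of the rank-one lattice R = ⟨-2d⟩, i.e. the group of additive automorphisms φ of ℤ/2dℤ satisfying q_R(φ(x)) = q_R(x) for all x, where q_R(x mod 2d) = -x²/(2d) mod 2ℤ (viewed as an element of ℚ/2ℤ), has order 2^{ω(d)}. -/
/-!
An isometry `φ` of `q_R` is multiplication by `u = φ 1`, and multiplication by `u` is an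
isometry exactly when `u² ≡ 1 (mod 4d)` for a lift of `u` to `ℤ`. Such a `u` is odd, and writing
`u = 2e - 1` the condition becomes `e² ≡ e (mod d)`: the isometries correspond to the
idempotents of `ℤ/dℤ`. By the Chinese remainder theorem `ℤ/dℤ` is the product of the local rings
`ℤ/p^kℤ` over the `ω(d)` primes `p ∣ d`, and a local ring has only the idempotents `0` and `1`.
-/

/-- The discriminant quadratic form of the rank-one lattice `⟨-2d⟩`:
on the class of an integer `x` (represented by `ZMod.val`), it is
`-x²/(2d) mod 2ℤ`, viewed in `ℚ/2ℤ = AddCircle (2 : ℚ)`. -/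
noncomputable def qR (d : ℕ) (x : ZMod (2 * d)) : AddCircle (2 : ℚ) :=
  ((-(x.val : ℚ) ^ 2 / (2 * d) : ℚ) : AddCircle (2 : ℚ))

theorem IsLocalRing.isIdempotentElem_iff {R : Type*} [CommRing R] [IsLocalRing R] {e : R} :
    IsIdempotentElem e ↔ e = 0 ∨ e = 1 := by
  refine ⟨fun he => ?_, by rintro (rfl | rfl) <;> simp [IsIdempotentElem]⟩
  have hprod : e * (1 - e) = 0 := by rw [mul_sub, mul_one, he.eq, sub_self]
  rcases IsLocalRing.isUnit_or_isUnit_one_sub_self e with hu | hu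
  · exact Or.inr (sub_eq_zero.mp (hu.mul_right_eq_zero.mp hprod)).symm
  · exact Or.inl (hu.mul_left_eq_zero.mp hprod)

theorem IsLocalRing.card_isIdempotentElem (R : Type*) [CommRing R] [IsLocalRing R] :
    Nat.card {e : R // IsIdempotentElem e} = 2 := by
  simp_rw [IsLocalRing.isIdempotentElem_iff]
  rw [← Set.coe_ofPred, Nat.card_coe_set_eq, Set.ofPred_or, Set.ofPred_eq_eq_singleton,
    Set.ofPred_eq_eq_singleton, Set.union_singleton, Set.ncard_pair one_ne_zero]

theorem ZMod.isLocalRing_prime_pow {p k : ℕ} (hp : p.Prime) (hk : k ≠ 0) :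
    IsLocalRing (ZMod (p ^ k)) := by
  have : Fact (1 < p ^ k) := ⟨Nat.one_lt_pow hk hp.one_lt⟩
  refine IsLocalRing.of_isUnit_or_isUnit_one_sub_self fun a => ?_
  rw [← ZMod.natCast_zmod_val a, ZMod.isUnit_natCast_iff_not_dvd_pow hp (Nat.pos_of_ne_zero hk)]
  by_cases ha : p ∣ a.val
  · right
    obtain ⟨m, hm⟩ := ha
    refine IsNilpotent.isUnit_one_sub ⟨k, ?_⟩
    rw [hm, Nat.cast_mul, mul_pow, ← Nat.cast_pow, ZMod.natCast_self, zero_mul]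
  · exact Or.inl ha

theorem Pi.card_isIdempotentElem {ι : Type*} [Fintype ι] (R : ι → Type*) [∀ i, Mul (R i)] :
    Nat.card {e : Π i, R i // IsIdempotentElem e} =
      ∏ i, Nat.card {e : R i // IsIdempotentElem e} := by
  rw [← Nat.card_pi]
  refine Nat.card_congr <| .trans ?_ Equiv.subtypePiEquivPi
  exact Equiv.subtypeEquivRight fun _ => funext_iff

theorem MulEquiv.card_isIdempotentElem {R S : Type*} [Mul R] [Mul S] (f : R ≃* S) :
    Nat.card {e : R // IsIdempotentElem e} = Nat.card {e : S // IsIdempotentElem e} :=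
  Nat.card_congr <| f.toEquiv.subtypeEquiv fun e => by
    simp only [IsIdempotentElem, MulEquiv.toEquiv_eq_coe, EquivLike.coe_coe, ← map_mul,
      f.injective.eq_iff]

theorem ZMod.card_isIdempotentElem {d : ℕ} (hd : d ≠ 0) :
    Nat.card {e : ZMod d // IsIdempotentElem e} = 2 ^ d.primeFactors.card := by
  rw [(ZMod.equivPi d hd).toMulEquiv.card_isIdempotentElem, Pi.card_isIdempotentElem]
  have (p : d.primeFactors) : IsLocalRing (ZMod (p ^ d.factorization p)) :=
    ZMod.isLocalRing_prime_pow (Nat.prime_of_mem_primeFactors p.2)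
      (Finsupp.mem_support_iff.mp (by rw [Nat.support_factorization]; exact p.2))
  simp [IsLocalRing.card_isIdempotentElem]

theorem Int.sq_modEq_sq_of_modEq_two_mul {a b n : ℤ} (h : a ≡ b [ZMOD 2 * n]) :
    a ^ 2 ≡ b ^ 2 [ZMOD 4 * n] := by
  obtain ⟨t, ht⟩ := Int.modEq_iff_dvd.mp h
  refine Int.modEq_iff_dvd.mpr ⟨t * a + n * t ^ 2, ?_⟩
  linear_combination (b + a + 2 * n * t) * ht

theorem ZMod.val_mul_modEq {n : ℕ} (x y : ZMod n) :
    ((x * y).val : ℤ) ≡ x.val * y.val [ZMOD n] := by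
  rw [ZMod.val_mul]
  push_cast
  exact Int.mod_modEq _ _

theorem ZMod.addMonoidHom_apply_eq_map_one_mul {n : ℕ} (f : ZMod n →+ ZMod n) (x : ZMod n) :
    f x = f 1 * x := by
  obtain ⟨a, rfl⟩ := ZMod.intCast_surjective x
  rw [← zsmul_one, map_zsmul, zsmul_eq_mul, zsmul_one, mul_comm]

section

variable {d : ℕ} [NeZero d]

theorem qR_eq_qR_iff (x y : ZMod (2 * d)) :
    qR d x = qR d y ↔ (x.val : ℤ) ^ 2 ≡ y.val ^ 2 [ZMOD 4 * d] := by
  have hd : (d : ℚ) ≠ 0 := NeZero.ne _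
  rw [qR, qR, QuotientAddGroup.eq, AddSubgroup.mem_zmultiples_iff, Int.modEq_comm,
    Int.modEq_iff_dvd]
  refine exists_congr fun k => ?_
  rw [zsmul_eq_mul, ← @Int.cast_inj ℚ]
  push_cast
  constructor <;> intro h
  · field_simp at h; linarith
  · field_simp; linarith

theorem qR_eq_qR_one_iff (u : ZMod (2 * d)) :
    qR d u = qR d 1 ↔ (u.val : ℤ) ^ 2 ≡ 1 [ZMOD 4 * d] := by
  have : Fact (1 < 2 * d) := ⟨by have := NeZero.pos d; omega⟩
  rw [qR_eq_qR_iff, ZMod.val_one, Nat.cast_one, one_pow]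

theorem mul_self_eq_one_of_qR_eq_qR_one {u : ZMod (2 * d)} (hu : qR d u = qR d 1) :
    u * u = 1 := by
  rw [qR_eq_qR_one_iff, show (4 * d : ℤ) = 2 * ((2 * d : ℕ) : ℤ) by push_cast; ring] at hu
  have := (ZMod.intCast_eq_intCast_iff _ _ _).mpr (Int.ModEq.of_mul_left 2 hu)
  push_cast at this
  rwa [ZMod.natCast_zmod_val, sq] at this

theorem qR_mul_of_qR_eq_qR_one {u : ZMod (2 * d)} (hu : qR d u = qR d 1) (x : ZMod (2 * d)) :
    qR d (u * x) = qR d x := by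
  rw [qR_eq_qR_one_iff] at hu
  rw [qR_eq_qR_iff]
  have hmul := ZMod.val_mul_modEq u x
  push_cast at hmul
  replace hmul := Int.sq_modEq_sq_of_modEq_two_mul hmul
  calc ((u * x).val : ℤ) ^ 2 ≡ (u.val * x.val) ^ 2 [ZMOD 4 * d] := hmul
    _ = u.val ^ 2 * x.val ^ 2 := by ring
    _ ≡ 1 * x.val ^ 2 [ZMOD 4 * d] := hu.mul_right _
    _ = x.val ^ 2 := one_mul _

variable (d) in
noncomputable def isometryEquiv :
    {φ : ZMod (2 * d) ≃+ ZMod (2 * d) // ∀ x, qR d (φ x) = qR d x} ≃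
      {u : ZMod (2 * d) // qR d u = qR d 1} where
  toFun φ := ⟨φ.1 1, φ.2 1⟩
  invFun u :=
    ⟨DistribMulAction.toAddEquiv _
        (Units.mkOfMulEqOne u.1 u.1 (mul_self_eq_one_of_qR_eq_qR_one u.2)),
      qR_mul_of_qR_eq_qR_one u.2⟩
  left_inv φ := Subtype.ext <| AddEquiv.ext fun x =>
    (ZMod.addMonoidHom_apply_eq_map_one_mul φ.1.toAddMonoidHom x).symm
  right_inv u := Subtype.ext (mul_one u.1)

-- `2 * e - 1` is well defined modulo `2 * d` although `e` only lives modulo `d`.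
variable (d) in
def liftTwoMulSubOne (e : ZMod d) : ZMod (2 * d) := ((2 * e.val - 1 : ℤ) : ZMod (2 * d))

theorem val_liftTwoMulSubOne_modEq (e : ZMod d) :
    ((liftTwoMulSubOne d e).val : ℤ) ≡ 2 * e.val - 1 [ZMOD 2 * d] := by
  rw [liftTwoMulSubOne, ZMod.val_intCast]
  exact_mod_cast Int.mod_modEq _ _

theorem qR_liftTwoMulSubOne_eq_qR_one_iff (e : ZMod d) :
    qR d (liftTwoMulSubOne d e) = qR d 1 ↔ IsIdempotentElem e := by
  have hsq := Int.sq_modEq_sq_of_modEq_two_mul (val_liftTwoMulSubOne_modEq e)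
  rw [qR_eq_qR_one_iff, Int.ModEq, hsq, ← Int.ModEq, Int.modEq_iff_dvd,
    show (1 : ℤ) - (2 * e.val - 1) ^ 2 = 4 * (e.val - e.val * e.val) by ring,
    mul_dvd_mul_iff_left (by norm_num), ← Int.modEq_iff_dvd, ← ZMod.intCast_eq_intCast_iff]
  push_cast
  rw [ZMod.natCast_zmod_val, IsIdempotentElem]

theorem liftTwoMulSubOne_injective : Function.Injective (liftTwoMulSubOne d) := by
  intro e e' h
  rw [liftTwoMulSubOne, liftTwoMulSubOne, ZMod.intCast_eq_intCast_iff, Int.modEq_iff_dvd,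
    show (2 * (e'.val : ℤ) - 1) - (2 * e.val - 1) = 2 * (e'.val - e.val) by ring, Nat.cast_mul,
    Nat.cast_two, mul_dvd_mul_iff_left (by norm_num), ← Int.modEq_iff_dvd,
    ← ZMod.intCast_eq_intCast_iff] at h
  push_cast at h
  rwa [ZMod.natCast_zmod_val, ZMod.natCast_zmod_val] at h

theorem exists_liftTwoMulSubOne_eq_of_qR_eq_qR_one {u : ZMod (2 * d)} (hu : qR d u = qR d 1) :
    ∃ e, liftTwoMulSubOne d e = u := by
  rw [qR_eq_qR_one_iff] at hu
  obtain ⟨j, hj⟩ : Odd (u.val : ℤ) := by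
    have h2 : (u.val : ℤ) ^ 2 ≡ 1 [ZMOD 2] := hu.of_dvd ⟨2 * d, by ring⟩
    exact (Int.odd_pow' two_ne_zero).mp (Int.odd_iff.mpr h2)
  refine ⟨((j + 1 : ℤ) : ZMod d), ?_⟩
  have hval : ((((j + 1 : ℤ) : ZMod d)).val : ℤ) ≡ j + 1 [ZMOD d] := by
    rw [ZMod.val_intCast]
    exact Int.mod_modEq _ _
  rw [← ZMod.natCast_zmod_val u, ← Int.cast_natCast, liftTwoMulSubOne,
    ZMod.intCast_eq_intCast_iff, hj]
  have := (hval.mul_left' (c := 2)).sub_right 1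
  rw [show 2 * (j + 1) - 1 = 2 * j + 1 by ring] at this
  exact_mod_cast this

variable (d) in
noncomputable def idempotentEquiv :
    {e : ZMod d // IsIdempotentElem e} ≃ {u : ZMod (2 * d) // qR d u = qR d 1} :=
  Equiv.ofBijective
    (fun e => ⟨liftTwoMulSubOne d e, (qR_liftTwoMulSubOne_eq_qR_one_iff e.1).mpr e.2⟩) <| by
    refine ⟨fun e e' h => Subtype.ext (liftTwoMulSubOne_injective (congrArg Subtype.val h)),
      fun u => ?_⟩
    obtain ⟨e, he⟩ := exists_liftTwoMulSubOne_eq_of_qR_eq_qR_one u.2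
    exact ⟨⟨e, (qR_liftTwoMulSubOne_eq_qR_one_iff e).mp (he ▸ u.2)⟩, Subtype.ext he⟩

end

/-- The orthogonal group of the discriminant form of `⟨-2d⟩` has order `2^{ω(d)}`. -/
theorem card_orthogonal_group_discriminant_form_neg2d (d : ℕ) (hd : 0 < d) :
    Nat.card {φ : ZMod (2 * d) ≃+ ZMod (2 * d) // ∀ x, qR d (φ x) = qR d x} =
      2 ^ d.primeFactors.card := by
  have : NeZero d := ⟨hd.ne'⟩
  rw [Nat.card_congr ((isometryEquiv d).trans (idempotentEquiv d).symm),
    ZMod.card_isIdempotentElem hd.ne']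
end

section
/- Let d be a positive integer. Then there exists an integer x with x² ≡ 1 + d (mod 4d) if and only if d ≡ 3 (mod 4) or d is divisible by 8. -/
/-- There exists an integer `x` with `x² ≡ 1 + d (mod 4d)` if and only if
`d ≡ 3 (mod 4)` or `8 ∣ d`. -/
theorem exists_sq_congr_one_add_d_iff (d : ℕ) (hd : 0 < d) :
    (∃ x : ℤ, x ^ 2 ≡ 1 + (d : ℤ) [ZMOD (4 * d)]) ↔ (d % 4 = 3 ∨ 8 ∣ d) := by
  constructor
  · rintro ⟨x, hx⟩
    obtain ⟨c, hc⟩ := hx.dvd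
    rcases Int.even_or_odd x with ⟨y, hy⟩ | ⟨y, hy⟩
    · left
      subst hy
      have h4 : (4:ℤ) ∣ (d:ℤ) + 1 := ⟨y^2 + d*c, by linear_combination hc⟩
      have h4' : 4 ∣ d + 1 := by exact_mod_cast h4
      omega
    · right
      subst hy
      obtain ⟨t, ht⟩ : Even (y * (y+1)) := Int.even_mul_succ_self y
      have h4 : (4:ℤ) ∣ (d:ℤ) := ⟨y^2 + y + d*c, by linear_combination hc⟩
      obtain ⟨e, he⟩ := h4
      have key : 4*e = 8*t + 16*(e*c) := by linear_combination hc + 4*ht + (4*c - 1)*he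
      have h8 : (8:ℤ) ∣ (d:ℤ) := ⟨t + 2*(e*c), by linear_combination he + key⟩
      exact_mod_cast h8
  · rintro (h3 | ⟨m, hm⟩)
    · obtain ⟨s, hs⟩ : ∃ s, d + 1 = 4 * s := ⟨(d+1)/4, by omega⟩
      refine ⟨(d:ℤ)+1, (Int.ModEq.symm (Int.modEq_iff_dvd.mpr ⟨(s:ℤ), ?_⟩))⟩
      have hs' : (d:ℤ) + 1 = 4 * s := by exact_mod_cast hs
      linear_combination (d:ℤ) * hs'
    · rcases Nat.even_or_odd m with ⟨n, hn⟩ | ⟨n, hn⟩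
      · have hd' : (d:ℤ) = 16*n := by exact_mod_cast (by omega : d = 16*n)
        refine ⟨8*(n:ℤ)+1, (Int.ModEq.symm (Int.modEq_iff_dvd.mpr ⟨(n:ℤ), ?_⟩))⟩
        rw [hd']; ring
      · have hd' : (d:ℤ) = 16*n + 8 := by exact_mod_cast (by omega : d = 16*n+8)
        refine ⟨24*(n:ℤ)+13, (Int.ModEq.symm (Int.modEq_iff_dvd.mpr ⟨9*(n:ℤ)+5, ?_⟩))⟩
        rw [hd']; ring
end

section
/- Let d be a positive integer with d ≡ 3 (mod 4) or 8 ∣ d, and let ω(d) denote the number of distinct prime divisors of d. Then the number of residue classes x ∈ ℤ/2dℤ satisfying x² ≡ 1 + d (mod 4d) (a condition that is well defined on classes modulo 2d) is exactly 2^{ω(d)}. -/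
/-!
Because `2d` is even, `(y + 2d)² ≡ y² (mod 4d)`, so twice the count is the number of square roots
of `1 + d` in `ZMod (4d)`. Write `4d = 2ᵏ m` with `m` odd; by the Chinese remainder theorem this
number is the product of the numbers of square roots modulo `m` and modulo `2ᵏ`. Modulo `m`,
`1 + d ≡ 1`, whose square roots are `±1` modulo each odd prime power, so there are `2^ω(m)`.
Modulo `2ᵏ`: if `d ≡ 3 (mod 4)` then `k = 2` and `1 + d ≡ 0` has the two square roots `0, 2`.
If `8 ∣ d`, then `c = 1 + d ≡ 1 (mod 8)` has four square roots modulo `2ᵏ`: for odd `t` and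
`j ≥ 2`, `(t + 2ʲ)² ≡ t² + 2ʲ⁺¹ (mod 2ʲ⁺²)`, so of the two lifts `t, t + 2ʲ` of a residue with
`t² ≡ c (mod 2ʲ⁺¹)` exactly one satisfies `t² ≡ c (mod 2ʲ⁺²)`. Hence the number of residues
`t` mod `2ʲ` with `t² ≡ c (mod 2ʲ⁺¹)` keeps its value `2` at `j = 2`.
-/

open Nat (count)

namespace Nat

theorem count_mul_of_periodic {P : ℕ → Prop} [DecidablePred P] {n : ℕ}
    (hP : Function.Periodic P n) (k : ℕ) : count P (k * n) = k * count P n := by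
  induction k with
  | zero => simp
  | succ k ih =>
    rw [add_mul, one_mul, count_add, ih, add_mul, one_mul]
    congr 2
    funext t
    rw [add_comm]
    exact hP.nat_mul k t

theorem count_two_mul_of_unique_lift {P Q : ℕ → Prop} [DecidablePred P] [DecidablePred Q]
    {n : ℕ} (hP : Function.Periodic P n) (hQP : ∀ t, Q t → P t)
    (hQ : ∀ t, P t → (Q (t + n) ↔ ¬ Q t)) : count Q (2 * n) = count P n := by
  rw [two_mul, count_add]
  suffices ∀ N, count Q N + count (fun t ↦ Q (n + t)) N = count P N from this n
  intro N
  induction N with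
  | zero => simp
  | succ N ih =>
    have hshift : Q (n + N) → P N := fun h ↦ hP N ▸ add_comm n N ▸ hQP _ h
    have hexactly_one := hQ N
    rw [add_comm N n] at hexactly_one
    simp only [count_succ, ← ih]
    by_cases hp : P N <;> by_cases hq : Q N <;> simp_all <;> omega

end Nat

open scoped Count in
theorem ZMod.card_val_eq_count {n : ℕ} [NeZero n] (P : ℕ → Prop) [DecidablePred P] :
    Nat.card {x : ZMod n // P x.val} = count P n := by
  rw [Nat.count_eq_card_fintype, Fintype.card_eq_nat_card]
  exact Nat.card_congr
    { toFun x := ⟨x.1.val, x.1.val_lt, x.2⟩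
      invFun k := ⟨k.1, by rw [ZMod.val_cast_of_lt k.2.1]; exact k.2.2⟩
      left_inv x := by simp
      right_inv k := by ext; simp [ZMod.val_cast_of_lt k.2.1] }

theorem RingEquiv.card_sq_eq {R S : Type*} [Semiring R] [Semiring S] (e : R ≃+* S) (c : R) :
    Nat.card {y : R // y ^ 2 = c} = Nat.card {z : S // z ^ 2 = e c} :=
  Nat.card_congr <| e.toEquiv.subtypeEquiv fun y ↦ by simp [← map_pow]

theorem Prod.card_sq_eq {R S : Type*} [Monoid R] [Monoid S] (c : R × S) :
    Nat.card {y : R × S // y ^ 2 = c} =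
      Nat.card {r : R // r ^ 2 = c.1} * Nat.card {s : S // s ^ 2 = c.2} := by
  refine (Nat.card_congr ?_).trans (Nat.card_prod _ _)
  exact (Equiv.subtypeEquivRight fun _ ↦ Prod.ext_iff).trans
    (Equiv.subtypeProdEquivProd (p := (· ^ 2 = c.1)) (q := (· ^ 2 = c.2)))

namespace ZMod

theorem card_sq_eq_intCast_mul {a b : ℕ} (hab : a.Coprime b) (c : ℤ) :
    Nat.card {y : ZMod (a * b) // y ^ 2 = c} =
      Nat.card {y : ZMod a // y ^ 2 = c} * Nat.card {y : ZMod b // y ^ 2 = c} := by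
  rw [(chineseRemainder hab).card_sq_eq, map_intCast, Prod.card_sq_eq]
  rfl

theorem sq_eq_one_iff_of_prime_pow {p : ℕ} (hp : p.Prime) (hp2 : p ≠ 2) (n : ℕ)
    (v : ZMod (p ^ n)) : v ^ 2 = 1 ↔ v = 1 ∨ v = -1 := by
  refine ⟨fun hv ↦ ?_, by rintro (rfl | rfl) <;> ring⟩
  obtain ⟨y, rfl⟩ := intCast_surjective v
  have hpZ : Prime (p : ℤ) := Nat.prime_iff_prime_int.mp hp
  have hdvd_iff (w : ℤ) : (p : ℤ) ^ n ∣ w ↔ (w : ZMod (p ^ n)) = 0 := by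
    rw [intCast_zmod_eq_zero_iff_dvd, Nat.cast_pow]
  have hdvd : (p : ℤ) ^ n ∣ (y - 1) * (y + 1) :=
    (hdvd_iff _).mpr (by push_cast; linear_combination hv)
  have hnot_both : ¬ ((p : ℤ) ∣ y - 1 ∧ (p : ℤ) ∣ y + 1) := fun ⟨h₁, h₂⟩ ↦ by
    have hp_two : (p : ℤ) ∣ 2 := by simpa using dvd_sub h₂ h₁
    have := Int.le_of_dvd two_pos hp_two
    have := hp.two_le
    omega
  rcases not_and_or.mp hnot_both with h | h
  · right
    have := (hdvd_iff _).mp (hpZ.pow_dvd_of_dvd_mul_left n h hdvd)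
    push_cast at this
    linear_combination this
  · left
    have := (hdvd_iff _).mp (hpZ.pow_dvd_of_dvd_mul_right n h hdvd)
    push_cast at this
    linear_combination this

theorem card_sq_eq_one_of_prime_pow {p n : ℕ} (hp : p.Prime) (hp2 : p ≠ 2) (hn : n ≠ 0) :
    Nat.card {v : ZMod (p ^ n) // v ^ 2 = 1} = 2 := by
  have : Fact (2 < p ^ n) := ⟨(hp.two_le.lt_of_ne' hp2).trans_le (Nat.le_self_pow hn p)⟩
  simp_rw [sq_eq_one_iff_of_prime_pow hp hp2]
  rw [← Set.ncard_pair (neg_one_ne_one (n := p ^ n)).symm, ← Nat.card_coe_set_eq]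
  rfl

theorem card_sq_eq_one_of_odd {m : ℕ} (hm : Odd m) :
    Nat.card {v : ZMod m // v ^ 2 = 1} = 2 ^ m.primeFactors.card := by
  have hmul (a b : ℕ) (hab : a.Coprime b) : Nat.card {v : ZMod (a * b) // v ^ 2 = 1} =
      Nat.card {v : ZMod a // v ^ 2 = 1} * Nat.card {v : ZMod b // v ^ 2 = 1} := by
    simpa using card_sq_eq_intCast_mul hab 1
  have hone : Nat.card {v : ZMod 1 // v ^ 2 = 1} = 1 :=
    Nat.card_eq_one_iff_unique.mpr ⟨inferInstance, ⟨⟨1, one_pow 2⟩⟩⟩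
  rw [Nat.multiplicative_factorization (fun n ↦ Nat.card {v : ZMod n // v ^ 2 = 1}) hmul hone
    hm.pos.ne', Finsupp.prod, Finset.prod_congr rfl (g := fun _ ↦ 2) ?_, Finset.prod_const,
    Nat.support_factorization]
  intro p hp
  have hp' : p ∈ m.primeFactors := Nat.support_factorization m ▸ hp
  refine card_sq_eq_one_of_prime_pow (Nat.prime_of_mem_primeFactors hp') ?_
    (Finsupp.mem_support_iff.mp hp)
  rintro rfl
  exact Nat.not_even_iff_odd.mpr hm (even_iff_two_dvd.mpr (Nat.dvd_of_mem_primeFactors hp'))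

end ZMod

abbrev SqModEq (M c : ℤ) (t : ℕ) : Prop := (t : ℤ) ^ 2 ≡ c [ZMOD M]

theorem ZMod.card_sq_eq_intCast_eq_count (N : ℕ) [NeZero N] (c : ℤ) :
    Nat.card {y : ZMod N // y ^ 2 = c} = count (SqModEq N c) N := by
  rw [← card_val_eq_count]
  refine Nat.card_congr (Equiv.subtypeEquivRight fun y ↦ ?_)
  rw [SqModEq, ← intCast_eq_intCast_iff]
  push_cast
  rw [natCast_zmod_val]

theorem Int.add_sq_modEq_sq_of_even {n : ℤ} (hn : Even n) (t : ℤ) :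
    (t + n) ^ 2 ≡ t ^ 2 [ZMOD 2 * n] := by
  obtain ⟨r, rfl⟩ := hn
  exact Int.modEq_iff_dvd.mpr ⟨-(t + r), by ring⟩

theorem sqModEq_periodic {n : ℕ} (hn : Even n) (c : ℤ) :
    Function.Periodic (SqModEq (2 * n) c) n := fun t ↦ by
  have := Int.add_sq_modEq_sq_of_even (n := n) (by exact_mod_cast hn) t
  simp only [SqModEq, Nat.cast_add]
  exact propext ⟨this.symm.trans, this.trans⟩

theorem ZMod.card_sq_eq_intCast_two_mul {n : ℕ} [NeZero n] (hn : Even n) (c : ℤ) :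
    Nat.card {y : ZMod (2 * n) // y ^ 2 = c} =
      2 * Nat.card {x : ZMod n // (x.val : ℤ) ^ 2 ≡ c [ZMOD 2 * n]} := by
  rw [card_sq_eq_intCast_eq_count, card_val_eq_count (SqModEq (2 * n) c), Nat.cast_mul,
    Nat.cast_ofNat, Nat.count_mul_of_periodic (sqModEq_periodic hn c)]

theorem Int.ModEq.add_modEq_two_mul_iff {a b n : ℤ} (hn : n ≠ 0) (h : a ≡ b [ZMOD n]) :
    a + n ≡ b [ZMOD 2 * n] ↔ ¬ a ≡ b [ZMOD 2 * n] := by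
  obtain ⟨D, hD⟩ := h.dvd
  simp only [Int.modEq_iff_dvd]
  rw [show b - (a + n) = n * (D - 1) by linarith, hD, mul_comm 2 n, mul_dvd_mul_iff_left hn,
    mul_dvd_mul_iff_left hn]
  omega

theorem Int.add_two_pow_sq_modEq {k : ℕ} (hk : 2 ≤ k) {t : ℤ} (ht : Odd t) :
    (t + 2 ^ k) ^ 2 ≡ t ^ 2 + 2 ^ (k + 1) [ZMOD 2 ^ (k + 2)] := by
  obtain ⟨j, rfl⟩ := Nat.exists_eq_add_of_le' hk
  obtain ⟨s, rfl⟩ := ht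
  exact Int.modEq_iff_dvd.mpr ⟨-(s + 2 ^ j), by ring⟩

theorem count_sqModEq_two_pow_succ {c : ℤ} (hc : Odd c) {k : ℕ} (hk : 2 ≤ k) :
    count (SqModEq (2 ^ (k + 2)) c) (2 ^ (k + 1)) = count (SqModEq (2 ^ (k + 1)) c) (2 ^ k) := by
  have hpow : ((2 ^ k : ℕ) : ℤ) = 2 ^ k := by norm_num
  rw [pow_succ' 2 k]
  refine Nat.count_two_mul_of_unique_lift ?_
    (fun t ht ↦ ht.of_dvd (pow_dvd_pow 2 (k + 1).le_succ)) fun t ht ↦ ?_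
  · have := sqModEq_periodic (n := 2 ^ k) ((Nat.even_pow' (by omega)).mpr even_two) c
    rwa [hpow, ← pow_succ'] at this
  have hodd : Odd (t : ℤ) := by
    have h2 : (t : ℤ) ^ 2 ≡ c [ZMOD 2] := ht.of_dvd (dvd_pow_self 2 k.succ_ne_zero)
    rw [← Int.odd_pow' two_ne_zero, Int.odd_iff, h2, ← Int.odd_iff]
    exact hc
  have hlift := Int.add_two_pow_sq_modEq hk hodd
  rw [SqModEq] at ht
  rw [pow_succ' 2 (k + 1)] at hlift
  rw [SqModEq, SqModEq, Nat.cast_add, hpow, pow_succ' 2 (k + 1),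
    ← ht.add_modEq_two_mul_iff (by positivity)]
  exact ⟨hlift.symm.trans, hlift.trans⟩

theorem count_sqModEq_two_pow {c : ℤ} (hc : c ≡ 1 [ZMOD 8]) {k : ℕ} (hk : 2 ≤ k) :
    count (SqModEq (2 ^ (k + 1)) c) (2 ^ k) = 2 := by
  induction k, hk using Nat.le_induction with
  | base =>
    have : SqModEq (2 ^ (2 + 1)) c = SqModEq 8 1 := by
      funext t
      exact propext ⟨(·.trans hc), (·.trans hc.symm)⟩
    simp only [this]
    decide
  | succ k hk ih =>
    have hc_odd : Odd c := by
      rw [Int.odd_iff]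
      have : c % 8 = 1 % 8 := hc
      omega
    rw [count_sqModEq_two_pow_succ hc_odd hk, ih]

theorem ZMod.card_sq_eq_intCast_two_pow {c : ℤ} (hc : c ≡ 1 [ZMOD 8]) {k : ℕ} (hk : 3 ≤ k) :
    Nat.card {y : ZMod (2 ^ k) // y ^ 2 = c} = 4 := by
  obtain ⟨j, rfl⟩ := Nat.exists_eq_add_of_le' (show 1 ≤ k by omega)
  rw [pow_succ', card_sq_eq_intCast_two_mul ((Nat.even_pow' (by omega)).mpr even_two),
    card_val_eq_count (SqModEq (2 * (2 ^ j : ℕ)) c)]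
  push_cast
  rw [← pow_succ', count_sqModEq_two_pow hc (by omega)]

theorem ZMod.card_sq_eq_intCast_four {c : ℤ} (hc : c ≡ 0 [ZMOD 4]) :
    Nat.card {y : ZMod 4 // y ^ 2 = c} = 2 := by
  rw [(intCast_eq_intCast_iff c 0 4).mpr hc, Int.cast_zero, Nat.card_eq_fintype_card]
  decide

theorem Nat.card_primeFactors_two_pow_mul {a m : ℕ} (ha : a ≠ 0) (hm : Odd m) :
    (2 ^ a * m).primeFactors.card = m.primeFactors.card + 1 := by
  rw [Coprime.primeFactors_mul ((coprime_two_left.mpr hm).pow_left a),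
    primeFactors_prime_pow ha prime_two, Finset.card_union_of_disjoint, add_comm,
    Finset.card_singleton]
  rw [Finset.disjoint_singleton_left]
  intro h
  exact not_even_iff_odd.mpr hm (even_iff_two_dvd.mpr (dvd_of_mem_primeFactors h))

theorem two_mul_card_classes_eq {d k m : ℕ} (hd : d ≠ 0) (hm : Odd m) (hmd : m ∣ d)
    (h4d : 4 * d = 2 ^ k * m) :
    2 * Nat.card {x : ZMod (2 * d) // (x.val : ℤ) ^ 2 ≡ 1 + d [ZMOD 4 * d]} =
      Nat.card {y : ZMod (2 ^ k) // y ^ 2 = ((1 + d : ℤ) : ZMod (2 ^ k))} *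
        2 ^ m.primeFactors.card := by
  have : NeZero (2 * d) := ⟨by omega⟩
  have hmod : (4 * d : ℤ) = 2 * ((2 * d : ℕ) : ℤ) := by push_cast; ring
  have hone : ((1 + d : ℤ) : ZMod m) = 1 := by
    rw [Int.cast_add, Int.cast_one, Int.cast_natCast, (ZMod.natCast_eq_zero_iff d m).mpr hmd,
      add_zero]
  rw [hmod, ← ZMod.card_sq_eq_intCast_two_mul (even_two_mul d),
    show 2 * (2 * d) = 2 ^ k * m by omega,
    ZMod.card_sq_eq_intCast_mul ((Nat.coprime_two_left.mpr hm).pow_left k), hone,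
    ZMod.card_sq_eq_one_of_odd hm]

/-- If `d ≡ 3 (mod 4)` or `8 ∣ d`, the number of residue classes `x ∈ ℤ/2dℤ`
with `x² ≡ 1 + d (mod 4d)` is `2^{ω(d)}`. -/
theorem card_classes_mod_two_d_sq_congr_one_add_d (d : ℕ) (hd : 0 < d)
    (h : d % 4 = 3 ∨ 8 ∣ d) :
    Nat.card {x : ZMod (2 * d) // ((x.val : ℤ) ^ 2) ≡ 1 + (d : ℤ) [ZMOD (4 * d)]} =
      2 ^ d.primeFactors.card := by
  rcases h with h3 | h8
  · have hodd : Odd d := Nat.odd_iff.mpr (by omega)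
    have := two_mul_card_classes_eq (k := 2) hd.ne' hodd dvd_rfl (by ring)
    rw [show 2 ^ 2 = 4 from rfl,
      ZMod.card_sq_eq_intCast_four (Int.modEq_iff_dvd.mpr (by omega))] at this
    omega
  · obtain ⟨a, m, hm, hdam⟩ := Nat.exists_eq_two_pow_mul_odd hd.ne'
    have ha : a ≠ 0 := by
      rintro rfl
      rw [pow_zero, one_mul] at hdam
      exact Nat.not_even_iff_odd.mpr (hdam ▸ hm) (even_iff_two_dvd.mpr (dvd_trans ⟨4, rfl⟩ h8))
    have := two_mul_card_classes_eq (k := a + 2) hd.ne' hm (Dvd.intro_left _ hdam.symm)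
      (by rw [hdam]; ring)
    rw [ZMod.card_sq_eq_intCast_two_pow (Int.modEq_iff_dvd.mpr (by omega)) (by omega)] at this
    have hω : d.primeFactors.card = m.primeFactors.card + 1 :=
      hdam ▸ Nat.card_primeFactors_two_pow_mul ha hm
    rw [hω, pow_succ]
    omega
end

section
/- Let d be a positive integer with d ≡ 1 (mod 4), and let ω(d) denote the number of distinct prime divisors of d. Consider the discriminant quadratic form q_T of the even binary lattice T with Gram matrix [[2,1],[1,(1-d)/2]], namely the map q_T : ℤ/dℤ → ℚ/2ℤ given on the class of an integer x by q_T(x) = -2x²/d mod 2ℤ. Then the group O(q_T) of additive automorphisms φ of ℤ/dℤ with q_T ∘ φ = q_T has order 2^{ω(d)}. -/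
/-!
An additive automorphism of `ℤ/dℤ` is multiplication by a unit `u`, and since `q_T a = q_T b`
exactly when `d ∣ a² - b²`, it preserves `q_T` iff `u² = 1`. Hence `O(q_T)` is in bijection with
the square roots of unity of `ℤ/dℤ`. Their number is multiplicative in `d` by the Chinese
remainder theorem, and modulo a power of an odd prime `p` they are only `±1`, because `p` cannot
divide both `u - 1` and `u + 1`.
-/

/-- The discriminant quadratic form of the even binary lattice with Gram matrix
`[[2,1],[1,(1-d)/2]]` (for `d ≡ 1 mod 4`) on its discriminant group `ℤ/dℤ`,
with values in `ℚ/2ℤ = AddCircle (2 : ℚ)`: `q_T(x) = -2x²/d mod 2ℤ`. -/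
noncomputable def qT (d : ℕ) (x : ZMod d) : AddCircle (2 : ℚ) :=
  ((-2 * (x.val : ℚ) ^ 2 / d : ℚ) : AddCircle (2 : ℚ))

theorem qT_eq_qT_iff {d : ℕ} [NeZero d] {a b : ZMod d} : qT d a = qT d b ↔ a ^ 2 = b ^ 2 := by
  have hd : (d : ℚ) ≠ 0 := Nat.cast_ne_zero.mpr (NeZero.ne d)
  calc qT d a = qT d b ↔ ∃ k : ℤ, (a.val : ℚ) ^ 2 - b.val ^ 2 = d * k := by
        rw [qT, qT, QuotientAddGroup.eq, AddSubgroup.mem_zmultiples_iff]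
        refine exists_congr fun k => ?_
        rw [zsmul_eq_mul]
        field_simp
        constructor <;> intro h <;> linarith
    _ ↔ (d : ℤ) ∣ (a.val : ℤ) ^ 2 - b.val ^ 2 := exists_congr fun k => by norm_cast
    _ ↔ a ^ 2 = b ^ 2 := by
        rw [← ZMod.intCast_eq_intCast_iff_dvd_sub, eq_comm]
        push_cast
        simp only [ZMod.natCast_zmod_val]

theorem ZMod.eq_one_or_eq_neg_one_of_sq_eq_one {p : ℕ} (hp : p.Prime) (hpo : Odd p) (n : ℕ)
    {x : ZMod (p ^ n)} (hx : x ^ 2 = 1) : x = 1 ∨ x = -1 := by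
  obtain ⟨a, rfl⟩ := intCast_surjective x
  have hpz : Prime (p : ℤ) := Nat.prime_iff_prime_int.mp hp
  have hdvd : (p : ℤ) ^ n ∣ (a - 1) * (a + 1) := by
    have := (intCast_zmod_eq_zero_iff_dvd ((a - 1) * (a + 1)) (p ^ n)).mp
      (by push_cast; linear_combination hx)
    exact_mod_cast this
  have hp_not_dvd_two : ¬ (p : ℤ) ∣ 2 := fun h => by
    obtain rfl := (Nat.prime_dvd_prime_iff_eq hp Nat.prime_two).mp (by exact_mod_cast h)
    exact absurd hpo (by decide)
  have hzero (b : ℤ) (hb : (p : ℤ) ^ n ∣ b) : (b : ZMod (p ^ n)) = 0 :=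
    (intCast_zmod_eq_zero_iff_dvd b _).mpr (by exact_mod_cast hb)
  by_cases h : (p : ℤ) ∣ a + 1
  · have : ¬ (p : ℤ) ∣ a - 1 := fun h' => hp_not_dvd_two (by simpa using dvd_sub h h')
    right
    rw [← add_eq_zero_iff_eq_neg]
    exact_mod_cast hzero _ (hpz.pow_dvd_of_dvd_mul_left n this hdvd)
  · left
    rw [← sub_eq_zero]
    exact_mod_cast hzero _ (hpz.pow_dvd_of_dvd_mul_right n h hdvd)

theorem card_rootsOfUnity_prod (k : ℕ) (M N : Type*) [CommMonoid M] [CommMonoid N] :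
    Nat.card (rootsOfUnity k (M × N)) =
      Nat.card (rootsOfUnity k M) * Nat.card (rootsOfUnity k N) := by
  rw [← Nat.card_prod]
  refine Nat.card_congr ((MulEquiv.prodUnits.toEquiv.subtypeEquiv fun u => ?_).trans
    Equiv.subtypeProdEquivProd)
  rw [mem_rootsOfUnity, ← MulEquiv.prodUnits.map_eq_one_iff, map_pow, Prod.ext_iff]
  rfl

theorem ZMod.card_rootsOfUnity_two_prime_pow {p n : ℕ} (hp : p.Prime) (hpo : Odd p)
    (hn : n ≠ 0) : Nat.card (rootsOfUnity 2 (ZMod (p ^ n))) = 2 := by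
  have : Fact (2 < p ^ n) := ⟨by
    have := hp.two_le
    have := Nat.odd_iff.mp hpo
    exact lt_of_lt_of_le (by omega) (Nat.le_self_pow hn p)⟩
  have hroots : (rootsOfUnity 2 (ZMod (p ^ n)) : Set (ZMod (p ^ n))ˣ) = {1, -1} := by
    ext u
    simp only [SetLike.mem_coe, mem_rootsOfUnity', Set.mem_insert_iff, Set.mem_singleton_iff,
      Units.ext_iff, Units.val_one, Units.val_neg]
    exact ⟨eq_one_or_eq_neg_one_of_sq_eq_one hp hpo n, by rintro (h | h) <;> simp [h]⟩
  rw [← SetLike.coe_sort_coe, Nat.card_coe_set_eq, hroots, Set.ncard_pair]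
  exact fun h => neg_one_ne_one (congrArg Units.val h).symm

theorem ZMod.card_rootsOfUnity_two_of_odd {d : ℕ} (hd : Odd d) :
    Nat.card (rootsOfUnity 2 (ZMod d)) = 2 ^ d.primeFactors.card := by
  induction d using Nat.recOnPosPrimePosCoprime with
  | prime_pow p n hp hn =>
    have hpo : Odd p := (Nat.odd_pow_iff hn.ne').mp hd
    rw [card_rootsOfUnity_two_prime_pow hp hpo hn.ne', Nat.primeFactors_prime_pow hn.ne' hp,
      Finset.card_singleton, pow_one]
  | zero => exact absurd hd (by decide)
  | one => simp
  | coprime a b _ _ hab iha ihb =>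
    obtain ⟨hoa, hob⟩ := Nat.odd_mul.mp hd
    rw [Nat.card_congr ((chineseRemainder hab).toMulEquiv.restrictRootsOfUnity 2).toEquiv,
      card_rootsOfUnity_prod, iha hoa, ihb hob, hab.primeFactors_mul,
      Finset.card_union_of_disjoint hab.disjoint_primeFactors, pow_add]

def orthogonalGroupQTEquivRootsOfUnity (d : ℕ) [NeZero d] :
    {φ : ZMod d ≃+ ZMod d // ∀ x, qT d (φ x) = qT d x} ≃ rootsOfUnity 2 (ZMod d) :=
  (((ZMod.AddAutEquivUnits d).toEquiv.trans Additive.toMul).symm.subtypeEquiv fun u => by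
    rw [mem_rootsOfUnity']
    change (u : ZMod d) ^ 2 = 1 ↔ ∀ x, qT d (u * x) = qT d x
    simp only [qT_eq_qT_iff, mul_pow]
    exact ⟨fun h x => by rw [h, one_mul], fun h => by simpa using h 1⟩).symm

theorem card_orthogonal_group_discriminant_form_T_general (d : ℕ)
    (hd4 : d % 4 = 1) :
    Nat.card {φ : ZMod d ≃+ ZMod d // ∀ x, qT d (φ x) = qT d x} =
      2 ^ d.primeFactors.card := by
  have hd : Odd d := Nat.odd_iff.mpr (by omega)
  have : NeZero d := ⟨hd.pos.ne'⟩
  rw [Nat.card_congr (orthogonalGroupQTEquivRootsOfUnity d), ZMod.card_rootsOfUnity_two_of_odd hd]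

/-- For `d ≡ 1 (mod 4)`, the orthogonal group of the discriminant form `q_T`
has order `2^{ω(d)}`. -/
theorem card_orthogonal_group_discriminant_form_T (d : ℕ) (hd : 0 < d)
    (hd4 : d % 4 = 1) :
    Nat.card {φ : ZMod d ≃+ ZMod d // ∀ x, qT d (φ x) = qT d x} =
      2 ^ d.primeFactors.card :=
  card_orthogonal_group_discriminant_form_T_general d hd4
end
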